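/- Let ε > 0, α > 0, k > 0, z > 0, V ≥ 0, and let S ≥ 0 satisfy S² ≥ 4·α·(V + z + k·S). Then D(V, S) ≥ (ε/2)·erfi(S/√(4·α·(V + z + k·S))), where D(V, S) = ε·erfi(S/√(4·α·(V + z + k·S))) − (ε·k·√α/(2·√(V + z + k·S)))·exp(S²/(4·α·(V + z + k·S))). -/

import Mathlib

/-!
Put `W = V + z + k·S` and `x = S / √(4αW)`, so that `x ≥ 1` and the exponent in `D` is `x²`.
Since `k·S ≤ W`, the coefficient of the exponential is at most `ε / (4x)`, and it remains to
show `exp (x²) / (2x) ≤ erfi x` for `x ≥ 1`. The difference `erfi t - exp (t²) / (2t)` has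
derivative `exp (t²) / (2t²) ≥ 0`, and at `t = 1` it is positive because the Taylor bound
`exp (u²) ≥ 1 + u² + u⁴/4` gives `erfi 1 ≥ 83/60 > e/2`.
-/

/-- The imaginary error function, `erfi x = ∫ u in 0..x, exp (u²)`
(the conventional erfi scaled by `√π / 2`). -/
noncomputable def erfi (x : ℝ) : ℝ := ∫ u in (0:ℝ)..x, Real.exp (u ^ 2)

/-- `D(V, S)`, the partial derivative in `S` of the shifted potential
`Φ(V, S) = φ(V + z + k·S, S)`. -/
noncomputable def Dfun (ε α k z V S : ℝ) : ℝ :=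
  ε * erfi (S / Real.sqrt (4 * α * (V + z + k * S))) -
    ε * k * Real.sqrt α / (2 * Real.sqrt (V + z + k * S)) *
      Real.exp (S ^ 2 / (4 * α * (V + z + k * S)))

open Real

lemma continuous_exp_sq : Continuous fun u : ℝ => exp (u ^ 2) := by fun_prop

lemma hasDerivAt_erfi (x : ℝ) : HasDerivAt erfi (exp (x ^ 2)) x :=
  intervalIntegral.integral_hasDerivAt_right (continuous_exp_sq.intervalIntegrable _ _)
    (continuous_exp_sq.stronglyMeasurableAtFilter _ _) continuous_exp_sq.continuousAt

lemma hasDerivAt_erfi_sub_exp_sq_div {x : ℝ} (hx : x ≠ 0) :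
    HasDerivAt (fun t => erfi t - exp (t ^ 2) / (2 * t)) (exp (x ^ 2) / (2 * x ^ 2)) x := by
  have hexp : HasDerivAt (fun t => exp (t ^ 2)) (exp (x ^ 2) * (2 * x)) x := by
    simpa using (hasDerivAt_pow 2 x).exp
  have hlin : HasDerivAt (fun t => 2 * t) 2 x := by
    simpa using (hasDerivAt_id x).const_mul (2 : ℝ)
  refine ((hasDerivAt_erfi x).sub (hexp.div hlin (by simpa using hx))).congr_deriv ?_
  field_simp
  ring

lemma exp_one_div_two_lt_erfi_one : exp 1 / 2 < erfi 1 := by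
  have htaylor : ∀ u ∈ Set.Icc (0 : ℝ) 1, 1 + u ^ 2 + u ^ 4 / 4 ≤ exp (u ^ 2) := by
    intro u _
    have hsq : exp (u ^ 2 / 2) ^ 2 = exp (u ^ 2) := by rw [← exp_nat_mul]; ring_nf
    nlinarith [add_one_le_exp (u ^ 2 / 2), exp_pos (u ^ 2 / 2), sq_nonneg u]
  have hint : ∫ u in (0 : ℝ)..1, (1 + u ^ 2 + u ^ 4 / 4) ≤ erfi 1 :=
    intervalIntegral.integral_mono_on zero_le_one
      ((by fun_prop : Continuous fun u : ℝ => 1 + u ^ 2 + u ^ 4 / 4).intervalIntegrable _ _)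
      (continuous_exp_sq.intervalIntegrable _ _) htaylor
  have hval : ∫ u in (0 : ℝ)..1, (1 + u ^ 2 + u ^ 4 / 4) = 83 / 60 := by norm_num
  linarith [exp_one_lt_d9]

lemma exp_sq_div_le_erfi {x : ℝ} (hx : 1 ≤ x) : exp (x ^ 2) / (2 * x) ≤ erfi x := by
  have hmono : MonotoneOn (fun t => erfi t - exp (t ^ 2) / (2 * t)) (Set.Ici 1) := by
    have hderiv : ∀ t ∈ Set.Ici (1 : ℝ), HasDerivAt (fun t => erfi t - exp (t ^ 2) / (2 * t))
        (exp (t ^ 2) / (2 * t ^ 2)) t := fun t ht =>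
      hasDerivAt_erfi_sub_exp_sq_div (by simp only [Set.mem_Ici] at ht; positivity)
    refine monotoneOn_of_hasDerivWithinAt_nonneg (convex_Ici 1)
      (fun t ht => (hderiv t ht).continuousAt.continuousWithinAt)
      (fun t ht => (hderiv t (interior_subset ht)).hasDerivWithinAt) fun t _ => by positivity
  have h := hmono Set.self_mem_Ici (Set.mem_Ici.mpr hx) hx
  norm_num at h
  linarith [exp_one_div_two_lt_erfi_one]

lemma mul_sqrt_div_two_sqrt_le {α k S W : ℝ} (hα : 0 < α) (hW : 0 < W) (hS : 0 < S)
    (hkS : k * S ≤ W) : k * √α / (2 * √W) ≤ 1 / (4 * (S / √(4 * α * W))) := by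
  have hsplit : √(4 * α * W) = 2 * √α * √W := by
    rw [sqrt_mul (by positivity), sqrt_mul (by norm_num),
      show √4 = 2 by rw [show (4 : ℝ) = 2 ^ 2 by norm_num, sqrt_sq zero_le_two]]
  have hα' := sqrt_pos.mpr hα
  have hW' := sqrt_pos.mpr hW
  rw [hsplit]
  field_simp
  nlinarith [sq_sqrt hW.le, mul_le_mul_of_nonneg_left hkS (by positivity : 0 ≤ √α * √W)]

/-- For large `S` (namely `S² ≥ 4α(V + z + kS)`), the derivative of the shifted
potential is at least half of its erfi part. -/
theorem Dfun_ge_half_erfi (ε α k z V S : ℝ)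
    (hε : 0 < ε) (hα : 0 < α) (hk : 0 < k) (hz : 0 < z) (hV : 0 ≤ V) (hS : 0 ≤ S)
    (hlarge : S ^ 2 ≥ 4 * α * (V + z + k * S)) :
    Dfun ε α k z V S ≥
      ε / 2 * erfi (S / Real.sqrt (4 * α * (V + z + k * S))) := by
  set W := V + z + k * S
  have hkS : k * S ≤ W := by linarith
  have hW : 0 < W := by nlinarith
  have hA : 0 < 4 * α * W := by positivity
  have hS0 : 0 < S := by nlinarith
  set x := S / √(4 * α * W)
  have hx : 1 ≤ x := by
    rw [one_le_div (sqrt_pos.mpr hA), ← sqrt_sq hS]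
    exact sqrt_le_sqrt hlarge
  have hexponent : S ^ 2 / (4 * α * W) = x ^ 2 := by rw [div_pow, sq_sqrt hA.le]
  have hcoeff := mul_sqrt_div_two_sqrt_le hα hW hS0 hkS
  have herfi := exp_sq_div_le_erfi hx
  have hx0 : 0 < x := by positivity
  unfold Dfun
  rw [hexponent]
  calc ε * erfi x - ε * k * √α / (2 * √W) * exp (x ^ 2)
      = ε * erfi x - ε * (k * √α / (2 * √W)) * exp (x ^ 2) := by ring
    _ ≥ ε * erfi x - ε * (1 / (4 * x)) * exp (x ^ 2) := by gcongr
    _ = ε * erfi x - ε / 2 * (exp (x ^ 2) / (2 * x)) := by field_simp; ring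
    _ ≥ ε / 2 * erfi x := by nlinarith
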